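/- arXiv:math-ph/0008022 — 9 statements merged into one kernel-verified Lean document; each statement's English description precedes it below -/
import Mathlib

section
/- Let A be a compact contraction on a separable Hilbert space having 1 as an eigenvalue. Then the geometric and algebraic multiplicities of the eigenvalue 1 coincide, i.e. Ran(A−1) ∩ Ker(A−1) = {0}. -/
/-!
A contraction fixes exactly the vectors its adjoint fixes: if `‖T‖ ≤ 1` and `T c = c`, expanding
`‖(T†) c - c‖²` with `Re ⟪(T†) c, c⟫ = ‖c‖²` shows it is `≤ 0`. Then `⟪T x - x, c⟫ = ⟪x, (T†) c - c⟫ = 0`,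
so a fixed vector in the range of `T - 1` is orthogonal to itself.
-/

open scoped InnerProduct InnerProductSpace

namespace ContinuousLinearMap

variable {𝕜 E : Type*} [RCLike 𝕜] [NormedAddCommGroup E] [InnerProductSpace 𝕜 E] [CompleteSpace E]

theorem adjoint_apply_eq_self_of_norm_le_one {T : E →L[𝕜] E} (hT : ‖T‖ ≤ 1) {c : E}
    (hc : T c = c) : (T†) c = c := by
  have hnorm : ‖(T†) c‖ ≤ ‖c‖ := by
    calc ‖(T†) c‖ ≤ ‖T†‖ * ‖c‖ := le_opNorm _ _
      _ ≤ 1 * ‖c‖ := by gcongr; rwa [adjoint.norm_map]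
      _ = ‖c‖ := one_mul _
  have hre : RCLike.re ⟪(T†) c, c⟫_𝕜 = ‖c‖ ^ 2 := by
    rw [adjoint_inner_left, hc, inner_self_eq_norm_sq]
  have hsq : ‖(T†) c - c‖ ^ 2 ≤ 0 := by
    rw [@norm_sub_sq 𝕜, hre]
    nlinarith [norm_nonneg ((T†) c)]
  rw [← sub_eq_zero, ← norm_eq_zero]
  exact pow_eq_zero_iff two_ne_zero |>.mp (le_antisymm hsq (sq_nonneg _))

theorem inner_apply_sub_self_eq_zero_of_norm_le_one {T : E →L[𝕜] E} (hT : ‖T‖ ≤ 1) {c : E}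
    (hc : T c = c) (x : E) : ⟪T x - x, c⟫_𝕜 = 0 := by
  rw [inner_sub_left, ← adjoint_inner_right, adjoint_apply_eq_self_of_norm_le_one hT hc, sub_self]

end ContinuousLinearMap

theorem compact_contraction_eigenvalue_one_semisimple_general
    {H : Type*} [NormedAddCommGroup H] [InnerProductSpace ℂ H]
    [CompleteSpace H]
    (A : H →L[ℂ] H) (hnorm : ‖A‖ ≤ 1) :
    ∀ c : H, A c = c → (∃ x : H, A x - x = c) → c = 0 := by
  rintro c hc ⟨x, rfl⟩
  exact inner_self_eq_zero.mp
    (ContinuousLinearMap.inner_apply_sub_self_eq_zero_of_norm_le_one hnorm hc x)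

/-- Lemma 3.3(ii): for a compact contraction `A` with eigenvalue `1`, the geometric and
algebraic multiplicities of the eigenvalue `1` coincide, i.e.
`Ran(A - 1) ∩ Ker(A - 1) = {0}`. -/
theorem compact_contraction_eigenvalue_one_semisimple
    {H : Type*} [NormedAddCommGroup H] [InnerProductSpace ℂ H]
    [CompleteSpace H] [TopologicalSpace.SeparableSpace H]
    (A : H →L[ℂ] H) (hA : IsCompactOperator (⇑A)) (hnorm : ‖A‖ ≤ 1)
    (heig : ∃ c : H, c ≠ 0 ∧ A c = c) :
    ∀ c : H, A c = c → (∃ x : H, A x - x = c) → c = 0 :=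
  compact_contraction_eigenvalue_one_semisimple_general A hnorm
end

section
/- Let U⁽¹⁾, U⁽²⁾ be unitary matrices in the block form above and V a unitary p×p matrix. If the p×p matrix V U⁽¹⁾₂₂ V* U⁽²⁾₁₁ has 1 as an eigenvalue with eigenvector c (i.e. V U⁽¹⁾₂₂ V* U⁽²⁾₁₁ c = c), then (U⁽²⁾₁₁)* U⁽²⁾₁₁ c = c and consequently U⁽²⁾₂₁ c = 0. -/
/-!
Write `x = B₁₁ c` and `y = B₂₁ c`. Since the first block column of `U⁽²⁾` is an isometry,
`‖c‖² = ‖x‖² + ‖y‖²`. On the other hand `c = (V A₂₂ V*) x`, and `V A₂₂ V*` is a contraction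
(`A₂₂` is a block of the isometric last block column of `U⁽¹⁾`, and `V` is unitary), so
`‖c‖² ≤ ‖x‖²`. Hence `y = 0`, and then `B₁₁* B₁₁ c = c - B₂₁* y = c`.
-/

open Matrix

namespace Matrix

variable {R m n k : Type*} [Fintype m] [Fintype n] [Fintype k]

section CommRing

variable [CommRing R] [StarRing R]

theorem star_mulVec_dotProduct_mulVec (M : Matrix m n R) (u : n → R) :
    star (M *ᵥ u) ⬝ᵥ (M *ᵥ u) = star u ⬝ᵥ ((Mᴴ * M) *ᵥ u) := by
  rw [star_mulVec, dotProduct_mulVec, vecMul_vecMul, dotProduct_mulVec]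

variable [DecidableEq n]

theorem star_mulVec_dotProduct_mulVec_add {M : Matrix m n R} {N : Matrix k n R}
    (h : Mᴴ * M + Nᴴ * N = 1) (u : n → R) :
    star (M *ᵥ u) ⬝ᵥ (M *ᵥ u) + star (N *ᵥ u) ⬝ᵥ (N *ᵥ u) = star u ⬝ᵥ u := by
  rw [star_mulVec_dotProduct_mulVec, star_mulVec_dotProduct_mulVec, ← dotProduct_add,
    ← add_mulVec, h, one_mulVec]

theorem conjTranspose_mul_self_mulVec_eq_self {M : Matrix m n R} {N : Matrix k n R}
    (h : Mᴴ * M + Nᴴ * N = 1) {c : n → R} (hc : N *ᵥ c = 0) : (Mᴴ * M) *ᵥ c = c := by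
  rw [← add_zero ((Mᴴ * M) *ᵥ c), ← mulVec_zero Nᴴ, ← hc, mulVec_mulVec, ← add_mulVec, h,
    one_mulVec]

variable [DecidableEq m]

theorem conjTranspose_mul_add_eq_one_of_fromBlocks_mem_unitaryGroup_left
    {A : Matrix m m R} {B : Matrix m n R} {C : Matrix n m R} {D : Matrix n n R}
    (h : fromBlocks A B C D ∈ unitaryGroup (m ⊕ n) R) : Aᴴ * A + Cᴴ * C = 1 := by
  have h' := congrArg toBlocks₁₁ ((mem_unitaryGroup_iff').1 h)
  rwa [star_eq_conjTranspose, fromBlocks_conjTranspose, fromBlocks_multiply, ← fromBlocks_one,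
    toBlocks_fromBlocks₁₁, toBlocks_fromBlocks₁₁] at h'

theorem conjTranspose_mul_add_eq_one_of_fromBlocks_mem_unitaryGroup_right
    {A : Matrix m m R} {B : Matrix m n R} {C : Matrix n m R} {D : Matrix n n R}
    (h : fromBlocks A B C D ∈ unitaryGroup (m ⊕ n) R) : Bᴴ * B + Dᴴ * D = 1 := by
  have h' := congrArg toBlocks₂₂ ((mem_unitaryGroup_iff').1 h)
  rwa [star_eq_conjTranspose, fromBlocks_conjTranspose, fromBlocks_multiply, ← fromBlocks_one,
    toBlocks_fromBlocks₂₂, toBlocks_fromBlocks₂₂] at h'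

end CommRing

section Contraction

variable [CommRing R] [StarRing R] [PartialOrder R]

def IsContraction (M : Matrix m n R) : Prop :=
  ∀ u, star (M *ᵥ u) ⬝ᵥ (M *ᵥ u) ≤ star u ⬝ᵥ u

theorem IsContraction.mul {M : Matrix m n R} {N : Matrix n k R} (hM : M.IsContraction)
    (hN : N.IsContraction) : (M * N).IsContraction := fun u => by
  rw [← mulVec_mulVec]
  exact (hM _).trans (hN u)

variable [DecidableEq n]

theorem isContraction_of_mem_unitaryGroup {U : Matrix n n R} (hU : U ∈ unitaryGroup n R) :
    U.IsContraction := fun u => by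
  rw [star_mulVec_dotProduct_mulVec, ← star_eq_conjTranspose, (mem_unitaryGroup_iff').1 hU,
    one_mulVec]

variable [StarOrderedRing R]

theorem isContraction_of_conjTranspose_mul_add_eq_one {M : Matrix m n R} {N : Matrix k n R}
    (h : Nᴴ * N + Mᴴ * M = 1) : M.IsContraction := fun u => by
  rw [← star_mulVec_dotProduct_mulVec_add h u]
  exact le_add_of_nonneg_left (dotProduct_star_self_nonneg _)

theorem mulVec_eq_zero_of_isContraction_mulVec_eq [NoZeroDivisors R] {M : Matrix m n R}
    {N : Matrix k n R} (h : Mᴴ * M + Nᴴ * N = 1) {T : Matrix n m R} (hT : T.IsContraction)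
    {c : n → R} (hc : T *ᵥ (M *ᵥ c) = c) : N *ᵥ c = 0 := by
  have hcx : star c ⬝ᵥ c ≤ star (M *ᵥ c) ⬝ᵥ (M *ᵥ c) := by
    conv_lhs => rw [← hc]
    exact hT _
  have hle : star (N *ᵥ c) ⬝ᵥ (N *ᵥ c) ≤ 0 := by
    rwa [← add_le_iff_nonpos_right, star_mulVec_dotProduct_mulVec_add h]
  exact dotProduct_star_self_eq_zero.1 (hle.antisymm (dotProduct_star_self_nonneg _))

end Contraction

end Matrix

theorem eigenvector_of_corner_product_general
    {m₁ m₂ p : ℕ}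
    (A₁₁ : Matrix (Fin m₁) (Fin m₁) ℂ) (A₁₂ : Matrix (Fin m₁) (Fin p) ℂ)
    (A₂₁ : Matrix (Fin p) (Fin m₁) ℂ) (A₂₂ : Matrix (Fin p) (Fin p) ℂ)
    (B₁₁ : Matrix (Fin p) (Fin p) ℂ) (B₁₂ : Matrix (Fin p) (Fin m₂) ℂ)
    (B₂₁ : Matrix (Fin m₂) (Fin p) ℂ) (B₂₂ : Matrix (Fin m₂) (Fin m₂) ℂ)
    (hU1 : fromBlocks A₁₁ A₁₂ A₂₁ A₂₂ ∈ Matrix.unitaryGroup (Fin m₁ ⊕ Fin p) ℂ)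
    (hU2 : fromBlocks B₁₁ B₁₂ B₂₁ B₂₂ ∈ Matrix.unitaryGroup (Fin p ⊕ Fin m₂) ℂ)
    (V : Matrix (Fin p) (Fin p) ℂ) (hV : V ∈ Matrix.unitaryGroup (Fin p) ℂ)
    (c : Fin p → ℂ)
    (h : (V * A₂₂ * Vᴴ * B₁₁).mulVec c = c) :
    (B₁₁ᴴ * B₁₁).mulVec c = c ∧ B₂₁.mulVec c = 0 := by
  open ComplexOrder in
  have hT : (V * A₂₂ * Vᴴ).IsContraction :=
    ((isContraction_of_mem_unitaryGroup hV).mul <| isContraction_of_conjTranspose_mul_add_eq_one <|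
      conjTranspose_mul_add_eq_one_of_fromBlocks_mem_unitaryGroup_right hU1).mul <|
      isContraction_of_mem_unitaryGroup (Unitary.star_mem hV)
  have hB := conjTranspose_mul_add_eq_one_of_fromBlocks_mem_unitaryGroup_left hU2
  have hB₂₁ : B₂₁ *ᵥ c = 0 := by
    open ComplexOrder in
    exact mulVec_eq_zero_of_isContraction_mulVec_eq hB hT (by rwa [mulVec_mulVec])
  exact ⟨conjTranspose_mul_self_mulVec_eq_self hB hB₂₁, hB₂₁⟩

/-- If `V U⁽¹⁾₂₂ V* U⁽²⁾₁₁ c = c` for blocks of unitary matrices `U⁽¹⁾`, `U⁽²⁾` and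
unitary `V`, then `(U⁽²⁾₁₁)* U⁽²⁾₁₁ c = c` and consequently `U⁽²⁾₂₁ c = 0`. -/
theorem eigenvector_of_corner_product
    {m₁ m₂ p : ℕ}
    (A₁₁ : Matrix (Fin m₁) (Fin m₁) ℂ) (A₁₂ : Matrix (Fin m₁) (Fin p) ℂ)
    (A₂₁ : Matrix (Fin p) (Fin m₁) ℂ) (A₂₂ : Matrix (Fin p) (Fin p) ℂ)
    (B₁₁ : Matrix (Fin p) (Fin p) ℂ) (B₁₂ : Matrix (Fin p) (Fin m₂) ℂ)
    (B₂₁ : Matrix (Fin m₂) (Fin p) ℂ) (B₂₂ : Matrix (Fin m₂) (Fin m₂) ℂ)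
    (hU1 : fromBlocks A₁₁ A₁₂ A₂₁ A₂₂ ∈ Matrix.unitaryGroup (Fin m₁ ⊕ Fin p) ℂ)
    (hU2 : fromBlocks B₁₁ B₁₂ B₂₁ B₂₂ ∈ Matrix.unitaryGroup (Fin p ⊕ Fin m₂) ℂ)
    (V : Matrix (Fin p) (Fin p) ℂ) (hV : V ∈ Matrix.unitaryGroup (Fin p) ℂ)
    (c : Fin p → ℂ) (hc : c ≠ 0)
    (h : (V * A₂₂ * Vᴴ * B₁₁).mulVec c = c) :
    (B₁₁ᴴ * B₁₁).mulVec c = c ∧ B₂₁.mulVec c = 0 :=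
  eigenvector_of_corner_product_general A₁₁ A₁₂ A₂₁ A₂₂ B₁₁ B₁₂ B₂₁ B₂₂ hU1 hU2 V hV c h
end

section
/- With C := Ker(I − V U⁽¹⁾₂₂ V* U⁽²⁾₁₁), the matrix I − V U⁽¹⁾₂₂ V* U⁽²⁾₁₁ maps the orthogonal complement C^⊥ bijectively onto itself. -/
/-!
`M = V A₂₂ V* B₁₁` is a contraction, being a product of unitaries and of corners of
unitaries. A contraction and its adjoint have the same fixed vectors, so `I - M` and `I - M*`
have the same kernel `C`. Hence the range of `I - M` is `(ker (I - M)*)ᗮ = Cᗮ`, and `I - M`,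
like every linear map, sends the orthogonal complement of its kernel bijectively onto its range.
-/

open Matrix
open scoped InnerProductSpace

namespace ContinuousLinearMap

variable {𝕜 H : Type*} [RCLike 𝕜] [NormedAddCommGroup H] [InnerProductSpace 𝕜 H] [CompleteSpace H]

theorem adjoint_apply_eq_of_apply_eq {T : H →L[𝕜] H} (hT : ‖T‖ ≤ 1) {x : H} (hx : T x = x) :
    adjoint T x = x := by
  have hnorm : ‖adjoint T x‖ ≤ ‖x‖ := by
    refine (le_opNorm _ x).trans (mul_le_of_le_one_left (norm_nonneg x) ?_)
    rwa [LinearIsometryEquiv.norm_map]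
  have hre : RCLike.re ⟪adjoint T x, x⟫_𝕜 = ‖x‖ ^ 2 := by
    rw [adjoint_inner_left, hx, inner_self_eq_norm_sq]
  have hsq : ‖adjoint T x - x‖ ^ 2 ≤ 0 := by
    rw [norm_sub_sq (𝕜 := 𝕜), hre]
    nlinarith [norm_nonneg (adjoint T x)]
  rw [← norm_sub_eq_zero_iff]
  exact pow_eq_zero_iff two_ne_zero |>.mp (le_antisymm hsq (sq_nonneg _))

theorem ker_adjoint_one_sub {T : H →L[𝕜] H} (hT : ‖T‖ ≤ 1) :
    (adjoint (1 - T)).ker = (1 - T).ker := by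
  have hT' : ‖adjoint T‖ ≤ 1 := by rwa [LinearIsometryEquiv.norm_map]
  rw [← star_eq_adjoint, star_sub, star_one, star_eq_adjoint]
  ext x
  simp only [LinearMap.mem_ker, coe_coe, _root_.sub_apply, one_apply_eq_self, sub_eq_zero]
  refine ⟨fun h => ?_, fun h => (adjoint_apply_eq_of_apply_eq hT h.symm).symm⟩
  simpa only [adjoint_adjoint] using (adjoint_apply_eq_of_apply_eq hT' h.symm).symm

end ContinuousLinearMap

namespace LinearMap

variable {𝕜 E F : Type*} [RCLike 𝕜] [NormedAddCommGroup E] [InnerProductSpace 𝕜 E]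

theorem bijOn_orthogonal_ker_range [AddCommGroup F] [Module 𝕜 F] (T : E →ₗ[𝕜] F)
    [(ker T).HasOrthogonalProjection] : Set.BijOn T (ker T)ᗮ (range T) := by
  refine ⟨fun x _ => mem_range_self T x,
    injOn_of_disjoint_ker le_rfl (ker T).orthogonal_disjoint.symm, ?_⟩
  rintro _ ⟨x, rfl⟩
  obtain ⟨k, hk, w, hw, rfl⟩ := (ker T).exists_add_mem_mem_orthogonal x
  exact ⟨w, hw, by rw [map_add, mem_ker.mp hk, zero_add]⟩

theorem range_eq_orthogonal_ker_of_ker_adjoint [FiniteDimensional 𝕜 E] {T : E →ₗ[𝕜] E}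
    (h : ker T.adjoint = ker T) : range T = (ker T)ᗮ := by
  rw [← h, orthogonal_ker, adjoint_adjoint]

end LinearMap

namespace Matrix

variable {𝕜 l m n : Type*} [RCLike 𝕜] [Fintype l] [Fintype m] [Fintype n] [DecidableEq n]

theorem conjTranspose_mul_add_eq_one_of_fromBlocks_mem_unitaryGroup [DecidableEq m]
    {A : Matrix m m 𝕜} {B : Matrix m n 𝕜} {C : Matrix n m 𝕜} {D : Matrix n n 𝕜}
    (hU : fromBlocks A B C D ∈ unitaryGroup (m ⊕ n) 𝕜) :
    Aᴴ * A + Cᴴ * C = 1 ∧ Bᴴ * B + Dᴴ * D = 1 := by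
  have h := mem_unitaryGroup_iff'.mp hU
  rw [star_eq_conjTranspose, fromBlocks_conjTranspose, fromBlocks_multiply, ← fromBlocks_one,
    fromBlocks_inj] at h
  exact ⟨h.1, h.2.2.2⟩

theorem inner_toEuclideanLin_conjTranspose_mul_self (A : Matrix m n 𝕜) (x : EuclideanSpace 𝕜 n) :
    ⟪toEuclideanLin (Aᴴ * A) x, x⟫_𝕜 = (‖toEuclideanLin A x‖ ^ 2 : ℝ) := by
  classical
  rw [toLpLin_mul_same, toEuclideanLin_conjTranspose_eq_adjoint, LinearMap.comp_apply,
    LinearMap.adjoint_inner_left, inner_self_eq_norm_sq_to_K, RCLike.ofReal_pow]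

theorem norm_toEuclideanLin_le_of_conjTranspose_mul_add_eq_one
    {A : Matrix l n 𝕜} {E : Matrix m n 𝕜} (h : Aᴴ * A + Eᴴ * E = 1) (x : EuclideanSpace 𝕜 n) :
    ‖toEuclideanLin A x‖ ≤ ‖x‖ := by
  have hsum : ‖toEuclideanLin A x‖ ^ 2 + ‖toEuclideanLin E x‖ ^ 2 = ‖x‖ ^ 2 := by
    have := congrArg (fun M => ⟪toEuclideanLin M x, x⟫_𝕜) h
    simp only [map_add, LinearMap.add_apply, inner_add_left,
      inner_toEuclideanLin_conjTranspose_mul_self] at this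
    rw [toLpLin_one, LinearMap.id_apply, inner_self_eq_norm_sq_to_K] at this
    exact_mod_cast this
  refine (sq_le_sq₀ (norm_nonneg _) (norm_nonneg _)).mp ?_
  rw [← hsum]
  exact le_add_of_nonneg_right (sq_nonneg _)

theorem norm_toEuclideanCLM_le_one_of_conjTranspose_mul_add_eq_one {A : Matrix n n 𝕜}
    {E : Matrix m n 𝕜} (h : Aᴴ * A + Eᴴ * E = 1) : ‖toEuclideanCLM (𝕜 := 𝕜) A‖ ≤ 1 :=
  ContinuousLinearMap.opNorm_le_bound _ zero_le_one fun x =>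
    (one_mul ‖x‖).symm ▸ norm_toEuclideanLin_le_of_conjTranspose_mul_add_eq_one h x

theorem norm_toEuclideanCLM_le_one_of_mem_unitaryGroup {U : Matrix n n 𝕜}
    (hU : U ∈ unitaryGroup n 𝕜) : ‖toEuclideanCLM (𝕜 := 𝕜) U‖ ≤ 1 :=
  ContinuousLinearMap.opNorm_le_bound _ zero_le_one fun x => by
    rw [ContinuousLinearMap.norm_map_of_mem_unitary (Unitary.map_mem toEuclideanCLM hU), one_mul]

theorem ker_adjoint_toEuclideanLin_one_sub {M : Matrix n n 𝕜}
    (hM : ‖toEuclideanCLM (𝕜 := 𝕜) M‖ ≤ 1) :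
    LinearMap.ker (toEuclideanLin (1 - M)).adjoint = LinearMap.ker (toEuclideanLin (1 - M)) := by
  rw [← toEuclideanLin_conjTranspose_eq_adjoint, ← coe_toEuclideanCLM_eq_toEuclideanLin,
    ← coe_toEuclideanCLM_eq_toEuclideanLin, ← star_eq_conjTranspose, map_star, map_sub, map_one,
    ContinuousLinearMap.star_eq_adjoint]
  exact ContinuousLinearMap.ker_adjoint_one_sub hM

end Matrix

/-- Lemma 3.6 (i): the matrix `I − V U⁽¹⁾₂₂ V* U⁽²⁾₁₁` maps the orthogonal complement of
`𝒞 = Ker(I − V U⁽¹⁾₂₂ V* U⁽²⁾₁₁)` bijectively onto itself. -/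
theorem corner_product_bijective_on_orthogonal_complement
    {m₁ m₂ p : ℕ}
    (A₁₁ : Matrix (Fin m₁) (Fin m₁) ℂ) (A₁₂ : Matrix (Fin m₁) (Fin p) ℂ)
    (A₂₁ : Matrix (Fin p) (Fin m₁) ℂ) (A₂₂ : Matrix (Fin p) (Fin p) ℂ)
    (B₁₁ : Matrix (Fin p) (Fin p) ℂ) (B₁₂ : Matrix (Fin p) (Fin m₂) ℂ)
    (B₂₁ : Matrix (Fin m₂) (Fin p) ℂ) (B₂₂ : Matrix (Fin m₂) (Fin m₂) ℂ)
    (hU1 : fromBlocks A₁₁ A₁₂ A₂₁ A₂₂ ∈ Matrix.unitaryGroup (Fin m₁ ⊕ Fin p) ℂ)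
    (hU2 : fromBlocks B₁₁ B₁₂ B₂₁ B₂₂ ∈ Matrix.unitaryGroup (Fin p ⊕ Fin m₂) ℂ)
    (V : Matrix (Fin p) (Fin p) ℂ) (hV : V ∈ Matrix.unitaryGroup (Fin p) ℂ) :
    Set.BijOn (⇑(Matrix.toEuclideanLin (1 - V * A₂₂ * Vᴴ * B₁₁)))
      ((LinearMap.ker (Matrix.toEuclideanLin (1 - V * A₂₂ * Vᴴ * B₁₁)))ᗮ : Set (EuclideanSpace ℂ (Fin p)))
      ((LinearMap.ker (Matrix.toEuclideanLin (1 - V * A₂₂ * Vᴴ * B₁₁)))ᗮ : Set (EuclideanSpace ℂ (Fin p))) := by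
  have hA : A₂₂ᴴ * A₂₂ + A₁₂ᴴ * A₁₂ = 1 := by
    rw [add_comm]; exact (conjTranspose_mul_add_eq_one_of_fromBlocks_mem_unitaryGroup hU1).2
  have hB := (conjTranspose_mul_add_eq_one_of_fromBlocks_mem_unitaryGroup hU2).1
  have hM : ‖toEuclideanCLM (𝕜 := ℂ) (V * A₂₂ * Vᴴ * B₁₁)‖ ≤ 1 := by
    have hV' := norm_toEuclideanCLM_le_one_of_mem_unitaryGroup hV
    have hVstar := norm_toEuclideanCLM_le_one_of_mem_unitaryGroup (Unitary.star_mem hV)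
    have hA' := norm_toEuclideanCLM_le_one_of_conjTranspose_mul_add_eq_one hA
    have hB' := norm_toEuclideanCLM_le_one_of_conjTranspose_mul_add_eq_one hB
    simpa only [map_mul, mul_one, star_eq_conjTranspose] using
      norm_mul_le_of_le (norm_mul_le_of_le (norm_mul_le_of_le hV' hA') hVstar) hB'
  have hrange := LinearMap.range_eq_orthogonal_ker_of_ker_adjoint
    (ker_adjoint_toEuclideanLin_one_sub hM)
  nth_rw 2 [← hrange]
  exact LinearMap.bijOn_orthogonal_ker_range _
end

section
/- Let U⁽¹⁾ ∈ U(n₁) and U⁽²⁾ ∈ U(n₂), V ∈ U(p), with U⁽¹⁾ V-compatible with U⁽²⁾. Define the (n₁+n₂−2p)×(n₁+n₂−2p) matrix U by U₁₁ = U⁽¹⁾₁₁ + U⁽¹⁾₁₂ K₂ U⁽²⁾₁₁ V U⁽¹⁾₂₁, U₂₂ = U⁽²⁾₂₂ + U⁽²⁾₂₁ K₁ U⁽¹⁾₂₂ V* U⁽²⁾₁₂, U₁₂ = U⁽¹⁾₁₂ K₂ U⁽²⁾₁₂, U₂₁ = U⁽²⁾₂₁ K₁ U⁽¹⁾₂₁,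 where K₁ = (I − V U⁽¹⁾₂₂ V* U⁽²⁾₁₁)⁻¹ V and K₂ = (I − V* U⁽²⁾₁₁ V U⁽¹⁾₂₂)⁻¹ V*. Then U is unitary. -/
open Matrix

set_option maxHeartbeats 1000000

/-- Theorem 3.9 (compatible case): the generalized star product `U⁽¹⁾ *_V U⁽²⁾` of unitary
matrices `U⁽¹⁾ ∈ U(n₁)`, `U⁽²⁾ ∈ U(n₂)` (with `U⁽¹⁾` `V`-compatible with `U⁽²⁾`) is unitary. -/
theorem generalized_star_product_unitary
    {m₁ m₂ p : ℕ}
    (A₁₁ : Matrix (Fin m₁) (Fin m₁) ℂ) (A₁₂ : Matrix (Fin m₁) (Fin p) ℂ)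
    (A₂₁ : Matrix (Fin p) (Fin m₁) ℂ) (A₂₂ : Matrix (Fin p) (Fin p) ℂ)
    (B₁₁ : Matrix (Fin p) (Fin p) ℂ) (B₁₂ : Matrix (Fin p) (Fin m₂) ℂ)
    (B₂₁ : Matrix (Fin m₂) (Fin p) ℂ) (B₂₂ : Matrix (Fin m₂) (Fin m₂) ℂ)
    (hU1 : fromBlocks A₁₁ A₁₂ A₂₁ A₂₂ ∈ Matrix.unitaryGroup (Fin m₁ ⊕ Fin p) ℂ)
    (hU2 : fromBlocks B₁₁ B₁₂ B₂₁ B₂₂ ∈ Matrix.unitaryGroup (Fin p ⊕ Fin m₂) ℂ)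
    (V : Matrix (Fin p) (Fin p) ℂ) (hV : V ∈ Matrix.unitaryGroup (Fin p) ℂ)
    (hcomp : IsUnit (1 - V * A₂₂ * Vᴴ * B₁₁)) :
    fromBlocks
      (A₁₁ + A₁₂ * ((1 - Vᴴ * B₁₁ * V * A₂₂)⁻¹ * Vᴴ) * B₁₁ * V * A₂₁)
      (A₁₂ * ((1 - Vᴴ * B₁₁ * V * A₂₂)⁻¹ * Vᴴ) * B₁₂)
      (B₂₁ * ((1 - V * A₂₂ * Vᴴ * B₁₁)⁻¹ * V) * A₂₁)
      (B₂₂ + B₂₁ * ((1 - V * A₂₂ * Vᴴ * B₁₁)⁻¹ * V) * A₂₂ * Vᴴ * B₁₂)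
      ∈ Matrix.unitaryGroup (Fin m₁ ⊕ Fin m₂) ℂ := by
  -- unitarity of V
  have hV1 : Vᴴ * V = 1 := by
    have h := Matrix.mem_unitaryGroup_iff'.mp hV
    rwa [Matrix.star_eq_conjTranspose] at h
  have hV2 : V * Vᴴ = 1 := by
    have h := Matrix.mem_unitaryGroup_iff.mp hV
    rwa [Matrix.star_eq_conjTranspose] at h
  -- block relations for U1
  have hA := Matrix.mem_unitaryGroup_iff'.mp hU1
  rw [Matrix.star_eq_conjTranspose, Matrix.fromBlocks_conjTranspose,
    Matrix.fromBlocks_multiply, ← Matrix.fromBlocks_one] at hA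
  have rA1 : A₁₁ᴴ * A₁₁ + A₂₁ᴴ * A₂₁ = 1 := by
    have h := congrArg Matrix.toBlocks₁₁ hA
    rwa [Matrix.toBlocks_fromBlocks₁₁, Matrix.toBlocks_fromBlocks₁₁] at h
  have rA2 : A₁₁ᴴ * A₁₂ + A₂₁ᴴ * A₂₂ = 0 := by
    have h := congrArg Matrix.toBlocks₁₂ hA
    rwa [Matrix.toBlocks_fromBlocks₁₂, Matrix.toBlocks_fromBlocks₁₂] at h
  have rA3 : A₁₂ᴴ * A₁₁ + A₂₂ᴴ * A₂₁ = 0 := by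
    have h := congrArg Matrix.toBlocks₂₁ hA
    rwa [Matrix.toBlocks_fromBlocks₂₁, Matrix.toBlocks_fromBlocks₂₁] at h
  have rA4 : A₁₂ᴴ * A₁₂ + A₂₂ᴴ * A₂₂ = 1 := by
    have h := congrArg Matrix.toBlocks₂₂ hA
    rwa [Matrix.toBlocks_fromBlocks₂₂, Matrix.toBlocks_fromBlocks₂₂] at h
  -- block relations for U2
  have hB := Matrix.mem_unitaryGroup_iff'.mp hU2
  rw [Matrix.star_eq_conjTranspose, Matrix.fromBlocks_conjTranspose,
    Matrix.fromBlocks_multiply, ← Matrix.fromBlocks_one] at hB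
  have rB1 : B₁₁ᴴ * B₁₁ + B₂₁ᴴ * B₂₁ = 1 := by
    have h := congrArg Matrix.toBlocks₁₁ hB
    rwa [Matrix.toBlocks_fromBlocks₁₁, Matrix.toBlocks_fromBlocks₁₁] at h
  have rB2 : B₁₁ᴴ * B₁₂ + B₂₁ᴴ * B₂₂ = 0 := by
    have h := congrArg Matrix.toBlocks₁₂ hB
    rwa [Matrix.toBlocks_fromBlocks₁₂, Matrix.toBlocks_fromBlocks₁₂] at h
  have rB3 : B₁₂ᴴ * B₁₁ + B₂₂ᴴ * B₂₁ = 0 := by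
    have h := congrArg Matrix.toBlocks₂₁ hB
    rwa [Matrix.toBlocks_fromBlocks₂₁, Matrix.toBlocks_fromBlocks₂₁] at h
  have rB4 : B₁₂ᴴ * B₁₂ + B₂₂ᴴ * B₂₂ = 1 := by
    have h := congrArg Matrix.toBlocks₂₂ hB
    rwa [Matrix.toBlocks_fromBlocks₂₂, Matrix.toBlocks_fromBlocks₂₂] at h
  have rA2' : A₁₁ᴴ * A₁₂ = -(A₂₁ᴴ * A₂₂) := eq_neg_of_add_eq_zero_left rA2
  have rA3' : A₁₂ᴴ * A₁₁ = -(A₂₂ᴴ * A₂₁) := eq_neg_of_add_eq_zero_left rA3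
  have rA4' : A₁₂ᴴ * A₁₂ = 1 - A₂₂ᴴ * A₂₂ := eq_sub_of_add_eq rA4
  have rB1' : B₂₁ᴴ * B₂₁ = 1 - B₁₁ᴴ * B₁₁ := eq_sub_of_add_eq' rB1
  have rB2' : B₂₁ᴴ * B₂₂ = -(B₁₁ᴴ * B₁₂) := eq_neg_of_add_eq_zero_right rB2
  have rB3' : B₂₂ᴴ * B₂₁ = -(B₁₂ᴴ * B₁₁) := eq_neg_of_add_eq_zero_right rB3
  have rB4' : B₂₂ᴴ * B₂₂ = 1 - B₁₂ᴴ * B₁₂ := eq_sub_of_add_eq' rB4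
  -- abbreviations
  set C := V * A₂₂ * Vᴴ with hCdef
  set M := (1 - C * B₁₁)⁻¹ with hMdef
  set N := (1 - B₁₁ * C)⁻¹ with hNdef
  have hdM : IsUnit (1 - C * B₁₁).det := (Matrix.isUnit_iff_isUnit_det _).mp hcomp
  have hM1 : (1 - C * B₁₁) * M = 1 := by rw [hMdef]; exact Matrix.mul_nonsing_inv _ hdM
  have hM2 : M * (1 - C * B₁₁) = 1 := by rw [hMdef]; exact Matrix.nonsing_inv_mul _ hdM
  have hNr : (1 - B₁₁ * C) * (1 + B₁₁ * M * C) = 1 := by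
    calc (1 - B₁₁ * C) * (1 + B₁₁ * M * C)
        = 1 - B₁₁ * C + B₁₁ * ((1 - C * B₁₁) * M) * C := by noncomm_ring
    _ = 1 := by rw [hM1]; noncomm_ring
  have hdN : IsUnit (1 - B₁₁ * C).det := Matrix.isUnit_det_of_right_inverse hNr
  have hN1 : (1 - B₁₁ * C) * N = 1 := by rw [hNdef]; exact Matrix.mul_nonsing_inv _ hdN
  have hN2 : N * (1 - B₁₁ * C) = 1 := by rw [hNdef]; exact Matrix.nonsing_inv_mul _ hdN
  -- basic identities
  have hMC : M * C = C * N := by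
    calc M * C = M * C * ((1 - B₁₁ * C) * N) := by rw [hN1, Matrix.mul_one]
    _ = (M * (1 - C * B₁₁)) * (C * N) := by noncomm_ring
    _ = C * N := by rw [hM2, Matrix.one_mul]
  have hDM : B₁₁ * M = N * B₁₁ := by
    calc B₁₁ * M = (N * (1 - B₁₁ * C)) * (B₁₁ * M) := by rw [hN2, Matrix.one_mul]
    _ = (N * B₁₁) * ((1 - C * B₁₁) * M) := by noncomm_ring
    _ = N * B₁₁ := by rw [hM1, Matrix.mul_one]
  have hMCD : M * C * B₁₁ = M - 1 := by
    calc M * C * B₁₁ = M - M * (1 - C * B₁₁) := by noncomm_ring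
    _ = M - 1 := by rw [hM2]
  have hCND : C * N * B₁₁ = M - 1 := by rw [← hMC]; exact hMCD
  have hNDC : N * B₁₁ * C = N - 1 := by
    calc N * B₁₁ * C = N - N * (1 - B₁₁ * C) := by noncomm_ring
    _ = N - 1 := by rw [hN2]
  have hDMC : B₁₁ * M * C = N - 1 := by rw [hDM]; exact hNDC
  have hDCN : B₁₁ * C * N = N - 1 := by
    calc B₁₁ * C * N = N - (1 - B₁₁ * C) * N := by noncomm_ring
    _ = N - 1 := by rw [hN1]
  -- adjoint identities
  have hMC' : Cᴴ * Mᴴ = Nᴴ * Cᴴ := by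
    have h := congrArg Matrix.conjTranspose hMC
    simpa [Matrix.conjTranspose_mul] using h
  have hDN' : B₁₁ᴴ * Nᴴ = Mᴴ * B₁₁ᴴ := by
    have h := congrArg Matrix.conjTranspose hDM
    try simp only [Matrix.conjTranspose_mul] at h
    exact h.symm
  have hDNC' : B₁₁ᴴ * Nᴴ * Cᴴ = Mᴴ - 1 := by
    have h := congrArg Matrix.conjTranspose hCND
    try simp only [Matrix.conjTranspose_mul, Matrix.conjTranspose_sub,
      Matrix.conjTranspose_one] at h
    rw [← Matrix.mul_assoc] at h
    exact h
  have hDMC' : Cᴴ * Mᴴ * B₁₁ᴴ = Nᴴ - 1 := by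
    have h := congrArg Matrix.conjTranspose hDMC
    try simp only [Matrix.conjTranspose_mul, Matrix.conjTranspose_sub,
      Matrix.conjTranspose_one] at h
    rw [← Matrix.mul_assoc] at h
    exact h
  -- V and A₂₂ exchange
  have hVA : V * A₂₂ = C * V := by
    rw [hCdef, Matrix.mul_assoc (V * A₂₂) Vᴴ V, hV1, Matrix.mul_one]
  have hAV : A₂₂ * Vᴴ = Vᴴ * C := by
    rw [hCdef, ← Matrix.mul_assoc, ← Matrix.mul_assoc, hV1, Matrix.one_mul]
  have hVA' : V * A₂₂ᴴ = Cᴴ * V := by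
    have h := congrArg Matrix.conjTranspose hAV
    simpa [Matrix.conjTranspose_mul] using h
  have hAV' : A₂₂ᴴ * Vᴴ = Vᴴ * Cᴴ := by
    have h := congrArg Matrix.conjTranspose hVA
    simpa [Matrix.conjTranspose_mul] using h
  -- contextual rewrite rules
  have cVV : ∀ {k : ℕ} (X : Matrix (Fin p) (Fin k) ℂ), V * (Vᴴ * X) = X := by
    intro k X; rw [← Matrix.mul_assoc, hV2, Matrix.one_mul]
  have cV'V : ∀ {k : ℕ} (X : Matrix (Fin p) (Fin k) ℂ), Vᴴ * (V * X) = X := by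
    intro k X; rw [← Matrix.mul_assoc, hV1, Matrix.one_mul]
  have cVA : ∀ {k : ℕ} (X : Matrix (Fin p) (Fin k) ℂ),
      V * (A₂₂ * X) = C * (V * X) := by
    intro k X; rw [← Matrix.mul_assoc, hVA, Matrix.mul_assoc]
  have cAV : ∀ {k : ℕ} (X : Matrix (Fin p) (Fin k) ℂ),
      A₂₂ * (Vᴴ * X) = Vᴴ * (C * X) := by
    intro k X; rw [← Matrix.mul_assoc, hAV, Matrix.mul_assoc]
  have cVA' : ∀ {k : ℕ} (X : Matrix (Fin p) (Fin k) ℂ),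
      V * (A₂₂ᴴ * X) = Cᴴ * (V * X) := by
    intro k X; rw [← Matrix.mul_assoc, hVA', Matrix.mul_assoc]
  have cAV' : ∀ {k : ℕ} (X : Matrix (Fin p) (Fin k) ℂ),
      A₂₂ᴴ * (Vᴴ * X) = Vᴴ * (Cᴴ * X) := by
    intro k X; rw [← Matrix.mul_assoc, hAV', Matrix.mul_assoc]
  have cA12 : ∀ {k : ℕ} (X : Matrix (Fin p) (Fin k) ℂ),
      A₁₁ᴴ * (A₁₂ * X) = -(A₂₁ᴴ * (A₂₂ * X)) := by
    intro k X; rw [← Matrix.mul_assoc, rA2', Matrix.neg_mul, Matrix.mul_assoc]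
  have cA22 : ∀ {k : ℕ} (X : Matrix (Fin p) (Fin k) ℂ),
      A₁₂ᴴ * (A₁₂ * X) = X - A₂₂ᴴ * (A₂₂ * X) := by
    intro k X
    rw [← Matrix.mul_assoc, rA4', Matrix.sub_mul, Matrix.one_mul, Matrix.mul_assoc]
  have cB21 : ∀ {k : ℕ} (X : Matrix (Fin p) (Fin k) ℂ),
      B₂₁ᴴ * (B₂₁ * X) = X - B₁₁ᴴ * (B₁₁ * X) := by
    intro k X
    rw [← Matrix.mul_assoc, rB1', Matrix.sub_mul, Matrix.one_mul, Matrix.mul_assoc]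
  have cB22 : ∀ {k : ℕ} (X : Matrix (Fin p) (Fin k) ℂ),
      B₂₂ᴴ * (B₂₁ * X) = -(B₁₂ᴴ * (B₁₁ * X)) := by
    intro k X; rw [← Matrix.mul_assoc, rB3', Matrix.neg_mul, Matrix.mul_assoc]
  have cCND : ∀ {k : ℕ} (X : Matrix (Fin p) (Fin k) ℂ),
      C * (N * (B₁₁ * X)) = M * X - X := by
    intro k X
    rw [← Matrix.mul_assoc, ← Matrix.mul_assoc, hCND, Matrix.sub_mul, Matrix.one_mul]
  have cDNC : ∀ {k : ℕ} (X : Matrix (Fin p) (Fin k) ℂ),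
      B₁₁ᴴ * (Nᴴ * (Cᴴ * X)) = Mᴴ * X - X := by
    intro k X
    rw [← Matrix.mul_assoc, ← Matrix.mul_assoc, hDNC', Matrix.sub_mul, Matrix.one_mul]
  have cDCN : ∀ {k : ℕ} (X : Matrix (Fin p) (Fin k) ℂ),
      B₁₁ * (C * (N * X)) = N * X - X := by
    intro k X
    rw [← Matrix.mul_assoc, ← Matrix.mul_assoc, hDCN, Matrix.sub_mul, Matrix.one_mul]
  have cC'M'D' : ∀ {k : ℕ} (X : Matrix (Fin p) (Fin k) ℂ),
      Cᴴ * (Mᴴ * (B₁₁ᴴ * X)) = Nᴴ * X - X := by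
    intro k X
    rw [← Matrix.mul_assoc, ← Matrix.mul_assoc, hDMC', Matrix.sub_mul, Matrix.one_mul]
  have cDN : ∀ {k : ℕ} (X : Matrix (Fin p) (Fin k) ℂ),
      B₁₁ᴴ * (Nᴴ * X) = Mᴴ * (B₁₁ᴴ * X) := by
    intro k X; rw [← Matrix.mul_assoc, hDN', Matrix.mul_assoc]
  have cND : ∀ {k : ℕ} (X : Matrix (Fin p) (Fin k) ℂ),
      N * (B₁₁ * X) = B₁₁ * (M * X) := by
    intro k X; rw [← Matrix.mul_assoc, ← hDM, Matrix.mul_assoc]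
  have cMC : ∀ {k : ℕ} (X : Matrix (Fin p) (Fin k) ℂ),
      M * (C * X) = C * (N * X) := by
    intro k X; rw [← Matrix.mul_assoc, hMC, Matrix.mul_assoc]
  have cM'C' : ∀ {k : ℕ} (X : Matrix (Fin p) (Fin k) ℂ),
      Cᴴ * (Mᴴ * X) = Nᴴ * (Cᴴ * X) := by
    intro k X; rw [← Matrix.mul_assoc, hMC', Matrix.mul_assoc]
  -- rewrite the second inverse
  have hVinv : V⁻¹ = Vᴴ := Matrix.inv_eq_left_inv hV1
  have hVHinv : (Vᴴ)⁻¹ = V := Matrix.inv_eq_left_inv hV2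
  have e2 : (1 : Matrix (Fin p) (Fin p) ℂ) - Vᴴ * B₁₁ * V * A₂₂
      = Vᴴ * ((1 - B₁₁ * C) * V) := by
    rw [hCdef]
    calc (1 : Matrix (Fin p) (Fin p) ℂ) - Vᴴ * B₁₁ * V * A₂₂
        = (Vᴴ * V) - Vᴴ * B₁₁ * V * (A₂₂ * (Vᴴ * V)) := by
          rw [hV1, Matrix.mul_one]
    _ = Vᴴ * ((1 - B₁₁ * (V * A₂₂ * Vᴴ)) * V) := by noncomm_ring
  have hK2 : (1 - Vᴴ * B₁₁ * V * A₂₂)⁻¹ * Vᴴ = Vᴴ * N := by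
    rw [e2, Matrix.mul_inv_rev, Matrix.mul_inv_rev, hVinv, hVHinv, ← hNdef,
      Matrix.mul_assoc (Vᴴ * N) V Vᴴ, hV2, Matrix.mul_one]
  clear_value C M N
  rw [hK2]
  -- the four block identities
  have hb11 : (A₁₁ + A₁₂ * (Vᴴ * N) * B₁₁ * V * A₂₁)ᴴ *
        (A₁₁ + A₁₂ * (Vᴴ * N) * B₁₁ * V * A₂₁) +
      (B₂₁ * (M * V) * A₂₁)ᴴ * (B₂₁ * (M * V) * A₂₁) = 1 := by
    try simp only [Matrix.conjTranspose_mul, Matrix.conjTranspose_add,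
      Matrix.conjTranspose_conjTranspose, Matrix.mul_add, Matrix.add_mul,
      Matrix.mul_sub, Matrix.sub_mul, Matrix.mul_one, Matrix.one_mul,
      Matrix.mul_neg, Matrix.neg_mul, Matrix.mul_assoc, neg_neg,
      cA12, rA3', cA22, cB21, cB22, rB2', rB4']
    try simp only [Matrix.mul_add, Matrix.add_mul, Matrix.mul_sub, Matrix.sub_mul,
      Matrix.mul_one, Matrix.one_mul, Matrix.mul_neg, Matrix.neg_mul,
      Matrix.mul_assoc, neg_neg,
      cVA, cAV, cVA', cAV', cVV, cV'V]
    try simp only [cCND, cDNC, cDCN, cC'M'D',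
      Matrix.mul_add, Matrix.add_mul, Matrix.mul_sub, Matrix.sub_mul,
      Matrix.mul_one, Matrix.one_mul, Matrix.mul_neg, Matrix.neg_mul, neg_neg,
      Matrix.mul_assoc]
    try simp only [cDN, Matrix.mul_add, Matrix.add_mul, Matrix.mul_sub,
      Matrix.sub_mul, Matrix.mul_neg, Matrix.neg_mul, Matrix.mul_assoc]
    try simp only [cND, cMC, cV'V, Matrix.mul_add, Matrix.add_mul, Matrix.mul_sub,
      Matrix.sub_mul, Matrix.mul_neg, Matrix.neg_mul, Matrix.mul_assoc]
    rw [← rA1]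
    abel
  have hb12 : (A₁₁ + A₁₂ * (Vᴴ * N) * B₁₁ * V * A₂₁)ᴴ * (A₁₂ * (Vᴴ * N) * B₁₂) +
      (B₂₁ * (M * V) * A₂₁)ᴴ *
        (B₂₂ + B₂₁ * (M * V) * A₂₂ * Vᴴ * B₁₂) = 0 := by
    try simp only [Matrix.conjTranspose_mul, Matrix.conjTranspose_add,
      Matrix.conjTranspose_conjTranspose, Matrix.mul_add, Matrix.add_mul,
      Matrix.mul_sub, Matrix.sub_mul, Matrix.mul_one, Matrix.one_mul,
      Matrix.mul_neg, Matrix.neg_mul, Matrix.mul_assoc, neg_neg,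
      cA12, rA3', cA22, cB21, cB22, rB2', rB4']
    try simp only [Matrix.mul_add, Matrix.add_mul, Matrix.mul_sub, Matrix.sub_mul,
      Matrix.mul_one, Matrix.one_mul, Matrix.mul_neg, Matrix.neg_mul,
      Matrix.mul_assoc, neg_neg,
      cVA, cAV, cVA', cAV', cVV, cV'V]
    try simp only [cMC, Matrix.mul_add, Matrix.add_mul, Matrix.mul_sub,
      Matrix.sub_mul, Matrix.mul_neg, Matrix.neg_mul, Matrix.mul_assoc]
    try simp only [cCND, cDNC, cDCN, cC'M'D',
      Matrix.mul_add, Matrix.add_mul, Matrix.mul_sub, Matrix.sub_mul,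
      Matrix.mul_one, Matrix.one_mul, Matrix.mul_neg, Matrix.neg_mul, neg_neg,
      Matrix.mul_assoc]
    try simp only [cDN, Matrix.mul_add, Matrix.add_mul, Matrix.mul_sub,
      Matrix.sub_mul, Matrix.mul_neg, Matrix.neg_mul, Matrix.mul_assoc]
    try simp only [cND, cMC, cV'V, Matrix.mul_add, Matrix.add_mul, Matrix.mul_sub,
      Matrix.sub_mul, Matrix.mul_neg, Matrix.neg_mul, Matrix.mul_assoc]
    abel
  have hb22 : (A₁₂ * (Vᴴ * N) * B₁₂)ᴴ * (A₁₂ * (Vᴴ * N) * B₁₂) +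
      (B₂₂ + B₂₁ * (M * V) * A₂₂ * Vᴴ * B₁₂)ᴴ *
        (B₂₂ + B₂₁ * (M * V) * A₂₂ * Vᴴ * B₁₂) = 1 := by
    try simp only [Matrix.conjTranspose_mul, Matrix.conjTranspose_add,
      Matrix.conjTranspose_conjTranspose, Matrix.mul_add, Matrix.add_mul,
      Matrix.mul_sub, Matrix.sub_mul, Matrix.mul_one, Matrix.one_mul,
      Matrix.mul_neg, Matrix.neg_mul, Matrix.mul_assoc, neg_neg,
      cA12, rA3', cA22, cB21, cB22, rB2', rB4']
    try simp only [Matrix.mul_add, Matrix.add_mul, Matrix.mul_sub, Matrix.sub_mul,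
      Matrix.mul_one, Matrix.one_mul, Matrix.mul_neg, Matrix.neg_mul,
      Matrix.mul_assoc, neg_neg,
      cVA, cAV, cVA', cAV', cVV, cV'V]
    try simp only [cMC, Matrix.mul_add, Matrix.add_mul, Matrix.mul_sub,
      Matrix.sub_mul, Matrix.mul_neg, Matrix.neg_mul, Matrix.mul_assoc]
    try simp only [cDCN, cC'M'D', cDNC, cCND,
      Matrix.mul_add, Matrix.add_mul, Matrix.mul_sub, Matrix.sub_mul,
      Matrix.mul_one, Matrix.one_mul, Matrix.mul_neg, Matrix.neg_mul, neg_neg,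
      Matrix.mul_assoc]
    try simp only [cM'C', cMC, cDN, cND, cV'V,
      Matrix.mul_add, Matrix.add_mul, Matrix.mul_sub, Matrix.sub_mul,
      Matrix.mul_neg, Matrix.neg_mul, Matrix.mul_assoc]
    abel
  have hb21 : (A₁₂ * (Vᴴ * N) * B₁₂)ᴴ *
        (A₁₁ + A₁₂ * (Vᴴ * N) * B₁₁ * V * A₂₁) +
      (B₂₂ + B₂₁ * (M * V) * A₂₂ * Vᴴ * B₁₂)ᴴ * (B₂₁ * (M * V) * A₂₁) = 0 := by
    have h := congrArg Matrix.conjTranspose hb12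
    rw [Matrix.conjTranspose_zero] at h
    calc (A₁₂ * (Vᴴ * N) * B₁₂)ᴴ * (A₁₁ + A₁₂ * (Vᴴ * N) * B₁₁ * V * A₂₁) +
          (B₂₂ + B₂₁ * (M * V) * A₂₂ * Vᴴ * B₁₂)ᴴ * (B₂₁ * (M * V) * A₂₁)
        = ((A₁₁ + A₁₂ * (Vᴴ * N) * B₁₁ * V * A₂₁)ᴴ * (A₁₂ * (Vᴴ * N) * B₁₂) +
          (B₂₁ * (M * V) * A₂₁)ᴴ *
            (B₂₂ + B₂₁ * (M * V) * A₂₂ * Vᴴ * B₁₂))ᴴ := by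
          simp only [Matrix.conjTranspose_mul, Matrix.conjTranspose_add,
            Matrix.conjTranspose_conjTranspose, Matrix.mul_add, Matrix.add_mul,
            Matrix.mul_assoc]
          try abel
    _ = 0 := h
  rw [Matrix.mem_unitaryGroup_iff', Matrix.star_eq_conjTranspose,
    Matrix.fromBlocks_conjTranspose, Matrix.fromBlocks_multiply,
    ← Matrix.fromBlocks_one, hb11, hb12, hb21, hb22]
end

section
/- Let U be a unitary n×n matrix in block form with blocks U₁₁ ((n−p)×(n−p)), U₁₂ ((n−p)×p), U₂₁ (p×(n−p)), U₂₂ (p×p). If Ker U₁₂ = {0}, then Ker (U₂₁ − U₂₂ U₁₂^⋆ U₁₁)* = {0}, where U₁₂^⋆ denotes the Moore–Penrose pseudoinverse of U₁₂. -/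
/-!
Since `U₁₂` is injective, `U₁₂ P U₁₂ = U₁₂` forces `P U₁₂ = 1`. The row block
`X = [-U₂₂ P, 1]` then annihilates the second block column of `U` and maps the first one to
`S = U₂₁ - U₂₂ P U₁₁`, so `U Uᴴ = 1` gives `S Sᴴ = X Xᴴ = 1 + (U₂₂ P)(U₂₂ P)ᴴ`.
This matrix is positive definite, hence `Sᴴ` is injective.
-/

open Matrix

open scoped ComplexOrder

namespace Matrix

variable {l m n k₁ k₂ R : Type*} [Fintype m] [Fintype n]

theorem mul_eq_one_of_mul_mul_eq_self [Ring R] [DecidableEq n] {A : Matrix m n R}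
    {P : Matrix n m R} (hA : ∀ b, A *ᵥ b = 0 → b = 0) (h : A * P * A = A) : P * A = 1 :=
  ext_of_mulVec_single fun j => sub_eq_zero.mp <| hA _ <| by
    rw [mulVec_sub, mulVec_mulVec, mulVec_mulVec, ← Matrix.mul_assoc, h, Matrix.mul_one, sub_self]

theorem mul_mul_conjTranspose_eq_of_fromCols_mul_conjTranspose_eq_one [Ring R] [StarRing R]
    [Fintype k₁] [Fintype k₂] [DecidableEq n] {C : Matrix n k₁ R} {D : Matrix n k₂ R}
    (hU : fromCols C D * (fromCols C D)ᴴ = 1) {X : Matrix l n R} (hXD : X * D = 0) :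
    X * C * (X * C)ᴴ = X * Xᴴ := by
  have h : X * (fromCols C D * (fromCols C D)ᴴ) * Xᴴ =
      X * C * (X * C)ᴴ + X * D * (X * D)ᴴ := by
    simp only [conjTranspose_fromCols_eq_fromRows_conjTranspose, fromCols_mul_fromRows,
      Matrix.mul_add, Matrix.add_mul, conjTranspose_mul, Matrix.mul_assoc]
  rwa [hU, Matrix.mul_one, hXD, Matrix.zero_mul, add_zero, eq_comm] at h

theorem PosDef.eq_zero_of_right_factor_mulVec_eq_zero [Ring R] [PartialOrder R] [StarRing R]
    {S : Matrix m n R} {T : Matrix n m R} (hST : (S * T).PosDef) {c : m → R}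
    (hc : T *ᵥ c = 0) : c = 0 := by
  by_contra hne
  have hpos := hST.dotProduct_mulVec_pos hne
  rw [← mulVec_mulVec, hc, mulVec_zero, dotProduct_zero] at hpos
  exact hpos.false

end Matrix

theorem kernel_of_adjoint_schur_like_block_general
    {m p : ℕ}
    (U₁₁ : Matrix (Fin m) (Fin m) ℂ) (U₁₂ : Matrix (Fin m) (Fin p) ℂ)
    (U₂₁ : Matrix (Fin p) (Fin m) ℂ) (U₂₂ : Matrix (Fin p) (Fin p) ℂ)
    (hU : fromBlocks U₁₁ U₁₂ U₂₁ U₂₂ ∈ Matrix.unitaryGroup (Fin m ⊕ Fin p) ℂ)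
    (hker : ∀ b : Fin p → ℂ, U₁₂.mulVec b = 0 → b = 0)
    (P : Matrix (Fin p) (Fin m) ℂ)
    (hP1 : U₁₂ * P * U₁₂ = U₁₂) :
    ∀ c : Fin p → ℂ, (U₂₁ - U₂₂ * P * U₁₁)ᴴ.mulVec c = 0 → c = 0 := by
  have hPU : P * U₁₂ = 1 := mul_eq_one_of_mul_mul_eq_self hker hP1
  have hUU : fromCols (fromRows U₁₁ U₂₁) (fromRows U₁₂ U₂₂) *
      (fromCols (fromRows U₁₁ U₂₁) (fromRows U₁₂ U₂₂))ᴴ = 1 := by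
    rw [fromCols_fromRows_eq_fromBlocks]
    exact mem_unitaryGroup_iff.mp hU
  set X := fromCols (-(U₂₂ * P)) (1 : Matrix (Fin p) (Fin p) ℂ)
  have hXD : X * fromRows U₁₂ U₂₂ = 0 := by
    simp [X, fromCols_mul_fromRows, Matrix.mul_assoc, hPU]
  have hXC : X * fromRows U₁₁ U₂₁ = U₂₁ - U₂₂ * P * U₁₁ := by
    simp only [fromCols_mul_fromRows, Matrix.neg_mul, Matrix.one_mul, X]
    abel
  have hXX : X * Xᴴ = 1 + U₂₂ * P * (U₂₂ * P)ᴴ := by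
    simp only [conjTranspose_fromCols_eq_fromRows_conjTranspose, conjTranspose_neg,
      conjTranspose_mul, conjTranspose_one, fromCols_mul_fromRows, Matrix.mul_neg, Matrix.neg_mul,
      neg_neg, mul_one, X]
    abel
  have key := mul_mul_conjTranspose_eq_of_fromCols_mul_conjTranspose_eq_one hUU hXD
  rw [hXC, hXX] at key
  have hpos : ((U₂₁ - U₂₂ * P * U₁₁) * (U₂₁ - U₂₂ * P * U₁₁)ᴴ).PosDef :=
    key ▸ PosDef.one.add_posSemidef (posSemidef_self_mul_conjTranspose _)
  exact fun c hc => hpos.eq_zero_of_right_factor_mulVec_eq_zero hc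

/-- Lemma 3.10: if the block `U₁₂` of a unitary matrix has trivial kernel, then
`(U₂₁ − U₂₂ U₁₂^⋆ U₁₁)*` has trivial kernel, where `U₁₂^⋆` is the Moore–Penrose
pseudoinverse of `U₁₂` (characterized by the four Penrose equations). -/
theorem kernel_of_adjoint_schur_like_block
    {m p : ℕ}
    (U₁₁ : Matrix (Fin m) (Fin m) ℂ) (U₁₂ : Matrix (Fin m) (Fin p) ℂ)
    (U₂₁ : Matrix (Fin p) (Fin m) ℂ) (U₂₂ : Matrix (Fin p) (Fin p) ℂ)
    (hU : fromBlocks U₁₁ U₁₂ U₂₁ U₂₂ ∈ Matrix.unitaryGroup (Fin m ⊕ Fin p) ℂ)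
    (hker : ∀ b : Fin p → ℂ, U₁₂.mulVec b = 0 → b = 0)
    (P : Matrix (Fin p) (Fin m) ℂ)
    (hP1 : U₁₂ * P * U₁₂ = U₁₂) (hP2 : P * U₁₂ * P = P)
    (hP3 : (P * U₁₂)ᴴ = P * U₁₂) (hP4 : (U₁₂ * P)ᴴ = U₁₂ * P) :
    ∀ c : Fin p → ℂ, (U₂₁ - U₂₂ * P * U₁₁)ᴴ.mulVec c = 0 → c = 0 :=
  kernel_of_adjoint_schur_like_block_general U₁₁ U₁₂ U₂₁ U₂₂ hU hker P hP1
end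

section
/- Let U be a 2p×2p unitary matrix whose p×p blocks U₁₂ and U₂₁ are invertible. Then the matrices U'₁₁ = −U₁₂⁻¹ U₁₁ (U₂₁ − U₂₂ U₁₂⁻¹ U₁₁)⁻¹, U'₂₁ = (U₂₁ − U₂₂ U₁₂⁻¹ U₁₁)⁻¹, U'₁₂ = U₁₂⁻¹ + U₁₂⁻¹ U₁₁ (U₂₁ − U₂₂ U₁₂⁻¹ U₁₁)⁻¹ U₂₂ U₁₂⁻¹, together with the appropriate U'₂₂, form a unitary matrix U' satisfying U *_p U' = U' *_p U = E (the star-product unit). -/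
open Matrix

/-- The generalized star product `U⁽¹⁾ *_V U⁽²⁾` (gluing `p` channels). -/
noncomputable def starProd {n₁ p n₂ : Type*}
    [Fintype n₁] [Fintype p] [Fintype n₂]
    [DecidableEq n₁] [DecidableEq p] [DecidableEq n₂]
    (U1 : Matrix (n₁ ⊕ p) (n₁ ⊕ p) ℂ) (V : Matrix p p ℂ)
    (U2 : Matrix (p ⊕ n₂) (p ⊕ n₂) ℂ) : Matrix (n₁ ⊕ n₂) (n₁ ⊕ n₂) ℂ :=
  fromBlocks
    (U1.toBlocks₁₁ +
      U1.toBlocks₁₂ * ((1 - Vᴴ * U2.toBlocks₁₁ * V * U1.toBlocks₂₂)⁻¹ * Vᴴ) *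
        U2.toBlocks₁₁ * V * U1.toBlocks₂₁)
    (U1.toBlocks₁₂ * ((1 - Vᴴ * U2.toBlocks₁₁ * V * U1.toBlocks₂₂)⁻¹ * Vᴴ) * U2.toBlocks₁₂)
    (U2.toBlocks₂₁ * ((1 - V * U1.toBlocks₂₂ * Vᴴ * U2.toBlocks₁₁)⁻¹ * V) * U1.toBlocks₂₁)
    (U2.toBlocks₂₂ +
      U2.toBlocks₂₁ * ((1 - V * U1.toBlocks₂₂ * Vᴴ * U2.toBlocks₁₁)⁻¹ * V) *
        U1.toBlocks₂₂ * Vᴴ * U2.toBlocks₁₂)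

/-- Theorem 3.11: a `2p × 2p` unitary matrix whose off-diagonal `p × p` blocks are
invertible has a (unique) two-sided inverse with respect to the star product `*_p`,
with explicit blocks `U'₁₁ = −U₁₂⁻¹ U₁₁ (U₂₁ − U₂₂ U₁₂⁻¹ U₁₁)⁻¹`,
`U'₂₁ = (U₂₁ − U₂₂ U₁₂⁻¹ U₁₁)⁻¹`,
`U'₁₂ = U₁₂⁻¹ + U₁₂⁻¹ U₁₁ (U₂₁ − U₂₂ U₁₂⁻¹ U₁₁)⁻¹ U₂₂ U₁₂⁻¹`. -/
theorem star_product_inverse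
    {p : ℕ}
    (U₁₁ U₁₂ U₂₁ U₂₂ : Matrix (Fin p) (Fin p) ℂ)
    (hU : fromBlocks U₁₁ U₁₂ U₂₁ U₂₂ ∈ Matrix.unitaryGroup (Fin p ⊕ Fin p) ℂ)
    (h12 : IsUnit U₁₂) (h21 : IsUnit U₂₁) :
    ∃ U₂₂' : Matrix (Fin p) (Fin p) ℂ,
      (fromBlocks
          (-(U₁₂⁻¹ * U₁₁ * (U₂₁ - U₂₂ * U₁₂⁻¹ * U₁₁)⁻¹))
          (U₁₂⁻¹ + U₁₂⁻¹ * U₁₁ * (U₂₁ - U₂₂ * U₁₂⁻¹ * U₁₁)⁻¹ * U₂₂ * U₁₂⁻¹)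
          ((U₂₁ - U₂₂ * U₁₂⁻¹ * U₁₁)⁻¹)
          U₂₂' ∈ Matrix.unitaryGroup (Fin p ⊕ Fin p) ℂ) ∧
      starProd (fromBlocks U₁₁ U₁₂ U₂₁ U₂₂) 1
        (fromBlocks
          (-(U₁₂⁻¹ * U₁₁ * (U₂₁ - U₂₂ * U₁₂⁻¹ * U₁₁)⁻¹))
          (U₁₂⁻¹ + U₁₂⁻¹ * U₁₁ * (U₂₁ - U₂₂ * U₁₂⁻¹ * U₁₁)⁻¹ * U₂₂ * U₁₂⁻¹)
          ((U₂₁ - U₂₂ * U₁₂⁻¹ * U₁₁)⁻¹)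
          U₂₂') = fromBlocks 0 1 1 0 ∧
      starProd
        (fromBlocks
          (-(U₁₂⁻¹ * U₁₁ * (U₂₁ - U₂₂ * U₁₂⁻¹ * U₁₁)⁻¹))
          (U₁₂⁻¹ + U₁₂⁻¹ * U₁₁ * (U₂₁ - U₂₂ * U₁₂⁻¹ * U₁₁)⁻¹ * U₂₂ * U₁₂⁻¹)
          ((U₂₁ - U₂₂ * U₁₂⁻¹ * U₁₁)⁻¹)
          U₂₂') 1 (fromBlocks U₁₁ U₁₂ U₂₁ U₂₂) = fromBlocks 0 1 1 0 := by
  classical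
  have hUU : fromBlocks U₁₁ U₁₂ U₂₁ U₂₂ * star (fromBlocks U₁₁ U₁₂ U₂₁ U₂₂) = 1 :=
    Matrix.mem_unitaryGroup_iff.mp hU
  have hUU' : star (fromBlocks U₁₁ U₁₂ U₂₁ U₂₂) * fromBlocks U₁₁ U₁₂ U₂₁ U₂₂ = 1 :=
    Matrix.mem_unitaryGroup_iff'.mp hU
  rw [Matrix.star_eq_conjTranspose, fromBlocks_conjTranspose, fromBlocks_multiply,
    ← fromBlocks_one, fromBlocks_inj] at hUU hUU'
  obtain ⟨r11, r12, r21, r22⟩ := hUU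
  obtain ⟨c11, c12, c21, c22⟩ := hUU'
  have d12 : IsUnit U₁₂.det := (Matrix.isUnit_iff_isUnit_det _).mp h12
  have d21 : IsUnit U₂₁.det := (Matrix.isUnit_iff_isUnit_det _).mp h21
  have d12h : IsUnit U₁₂ᴴ.det := by rw [Matrix.det_conjTranspose]; exact d12.star
  have d21h : IsUnit U₂₁ᴴ.det := by rw [Matrix.det_conjTranspose]; exact d21.star
  -- key: U₁₁ * U₂₁ᴴ = -(U₁₂ * U₂₂ᴴ)
  have k1 : U₁₁ * U₂₁ᴴ = -(U₁₂ * U₂₂ᴴ) := eq_neg_of_add_eq_zero_left r12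
  have hA1 : (U₂₁ - U₂₂ * U₁₂⁻¹ * U₁₁) * U₂₁ᴴ = 1 := by
    calc (U₂₁ - U₂₂ * U₁₂⁻¹ * U₁₁) * U₂₁ᴴ
        = U₂₁ * U₂₁ᴴ - U₂₂ * U₁₂⁻¹ * (U₁₁ * U₂₁ᴴ) := by noncomm_ring
      _ = U₂₁ * U₂₁ᴴ + U₂₂ * (U₁₂⁻¹ * U₁₂) * U₂₂ᴴ := by rw [k1]; noncomm_ring
      _ = 1 := by rw [Matrix.nonsing_inv_mul _ d12, mul_one]; exact r22
  have e3 : (U₂₁ - U₂₂ * U₁₂⁻¹ * U₁₁)⁻¹ = U₂₁ᴴ := Matrix.inv_eq_right_inv hA1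
  have e1 : -(U₁₂⁻¹ * U₁₁ * (U₂₁ - U₂₂ * U₁₂⁻¹ * U₁₁)⁻¹) = U₂₂ᴴ := by
    rw [e3, Matrix.mul_assoc, k1]
    rw [show U₁₂⁻¹ * -(U₁₂ * U₂₂ᴴ) = -((U₁₂⁻¹ * U₁₂) * U₂₂ᴴ) from by noncomm_ring,
      Matrix.nonsing_inv_mul _ d12, one_mul, neg_neg]
  have e2 : U₁₂⁻¹ + U₁₂⁻¹ * U₁₁ * (U₂₁ - U₂₂ * U₁₂⁻¹ * U₁₁)⁻¹ * U₂₂ * U₁₂⁻¹ = U₁₂ᴴ := by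
    have h2 : (1 : Matrix (Fin p) (Fin p) ℂ) - U₂₂ᴴ * U₂₂ = U₁₂ᴴ * U₁₂ :=
      (eq_sub_of_add_eq c22).symm
    calc U₁₂⁻¹ + U₁₂⁻¹ * U₁₁ * (U₂₁ - U₂₂ * U₁₂⁻¹ * U₁₁)⁻¹ * U₂₂ * U₁₂⁻¹
        = U₁₂⁻¹ + U₁₂⁻¹ * ((U₁₁ * (U₂₁ - U₂₂ * U₁₂⁻¹ * U₁₁)⁻¹) * (U₂₂ * U₁₂⁻¹)) := by
          noncomm_ring
      _ = U₁₂⁻¹ - (U₁₂⁻¹ * U₁₂) * (U₂₂ᴴ * (U₂₂ * U₁₂⁻¹)) := by rw [e3, k1]; noncomm_ring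
      _ = (1 - U₂₂ᴴ * U₂₂) * U₁₂⁻¹ := by rw [Matrix.nonsing_inv_mul _ d12, one_mul]; noncomm_ring
      _ = U₁₂ᴴ * (U₁₂ * U₁₂⁻¹) := by rw [h2, Matrix.mul_assoc]
      _ = U₁₂ᴴ := by rw [Matrix.mul_nonsing_inv _ d12, mul_one]
  rw [e1, e2, e3]
  refine ⟨U₁₁ᴴ, ?_, ?_, ?_⟩
  · rw [Matrix.mem_unitaryGroup_iff', Matrix.star_eq_conjTranspose,
      fromBlocks_conjTranspose, fromBlocks_multiply, ← fromBlocks_one, fromBlocks_inj]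
    simp only [conjTranspose_conjTranspose]
    exact ⟨(add_comm _ _).trans r22, (add_comm _ _).trans r21,
      (add_comm _ _).trans r12, (add_comm _ _).trans r11⟩
  · simp only [starProd, toBlocks_fromBlocks₁₁, toBlocks_fromBlocks₁₂,
      toBlocks_fromBlocks₂₁, toBlocks_fromBlocks₂₂, conjTranspose_one, mul_one, one_mul]
    rw [fromBlocks_inj]
    have i1 : (1 - U₂₂ᴴ * U₂₂)⁻¹ = U₁₂⁻¹ * U₁₂ᴴ⁻¹ := by
      rw [show (1 : Matrix (Fin p) (Fin p) ℂ) - U₂₂ᴴ * U₂₂ = U₁₂ᴴ * U₁₂ from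
        (eq_sub_of_add_eq c22).symm, Matrix.mul_inv_rev]
    have i2 : (1 - U₂₂ * U₂₂ᴴ)⁻¹ = U₂₁ᴴ⁻¹ * U₂₁⁻¹ := by
      rw [show (1 : Matrix (Fin p) (Fin p) ℂ) - U₂₂ * U₂₂ᴴ = U₂₁ * U₂₁ᴴ from
        (eq_sub_of_add_eq r22).symm, Matrix.mul_inv_rev]
    refine ⟨?_, ?_, ?_, ?_⟩
    · rw [i1, show U₁₁ + U₁₂ * (U₁₂⁻¹ * U₁₂ᴴ⁻¹) * U₂₂ᴴ * U₂₁
          = U₁₁ + (U₁₂ * U₁₂⁻¹) * (U₁₂ᴴ⁻¹ * (U₂₂ᴴ * U₂₁)) from by noncomm_ring,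
        Matrix.mul_nonsing_inv _ d12, one_mul,
        show U₂₂ᴴ * U₂₁ = -(U₁₂ᴴ * U₁₁) from eq_neg_of_add_eq_zero_right c21,
        show U₁₂ᴴ⁻¹ * -(U₁₂ᴴ * U₁₁) = -((U₁₂ᴴ⁻¹ * U₁₂ᴴ) * U₁₁) from by noncomm_ring,
        Matrix.nonsing_inv_mul _ d12h, one_mul, add_neg_cancel]
    · rw [i1, show U₁₂ * (U₁₂⁻¹ * U₁₂ᴴ⁻¹) * U₁₂ᴴ
          = (U₁₂ * U₁₂⁻¹) * (U₁₂ᴴ⁻¹ * U₁₂ᴴ) from by noncomm_ring,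
        Matrix.mul_nonsing_inv _ d12, Matrix.nonsing_inv_mul _ d12h, one_mul]
    · rw [i2, show U₂₁ᴴ * (U₂₁ᴴ⁻¹ * U₂₁⁻¹) * U₂₁
          = (U₂₁ᴴ * U₂₁ᴴ⁻¹) * (U₂₁⁻¹ * U₂₁) from by noncomm_ring,
        Matrix.mul_nonsing_inv _ d21h, Matrix.nonsing_inv_mul _ d21, one_mul]
    · rw [i2, show U₁₁ᴴ + U₂₁ᴴ * (U₂₁ᴴ⁻¹ * U₂₁⁻¹) * U₂₂ * U₁₂ᴴ
          = U₁₁ᴴ + (U₂₁ᴴ * U₂₁ᴴ⁻¹) * (U₂₁⁻¹ * (U₂₂ * U₁₂ᴴ)) from by noncomm_ring,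
        Matrix.mul_nonsing_inv _ d21h, one_mul,
        show U₂₂ * U₁₂ᴴ = -(U₂₁ * U₁₁ᴴ) from eq_neg_of_add_eq_zero_right r21,
        show U₂₁⁻¹ * -(U₂₁ * U₁₁ᴴ) = -((U₂₁⁻¹ * U₂₁) * U₁₁ᴴ) from by noncomm_ring,
        Matrix.nonsing_inv_mul _ d21, one_mul, add_neg_cancel]
  · simp only [starProd, toBlocks_fromBlocks₁₁, toBlocks_fromBlocks₁₂,
      toBlocks_fromBlocks₂₁, toBlocks_fromBlocks₂₂, conjTranspose_one, mul_one, one_mul]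
    rw [fromBlocks_inj]
    have i3 : (1 - U₁₁ * U₁₁ᴴ)⁻¹ = U₁₂ᴴ⁻¹ * U₁₂⁻¹ := by
      rw [show (1 : Matrix (Fin p) (Fin p) ℂ) - U₁₁ * U₁₁ᴴ = U₁₂ * U₁₂ᴴ from
        (eq_sub_of_add_eq ((add_comm _ _).trans r11)).symm, Matrix.mul_inv_rev]
    have i4 : (1 - U₁₁ᴴ * U₁₁)⁻¹ = U₂₁⁻¹ * U₂₁ᴴ⁻¹ := by
      rw [show (1 : Matrix (Fin p) (Fin p) ℂ) - U₁₁ᴴ * U₁₁ = U₂₁ᴴ * U₂₁ from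
        (eq_sub_of_add_eq ((add_comm _ _).trans c11)).symm, Matrix.mul_inv_rev]
    refine ⟨?_, ?_, ?_, ?_⟩
    · rw [i3, show U₂₂ᴴ + U₁₂ᴴ * (U₁₂ᴴ⁻¹ * U₁₂⁻¹) * U₁₁ * U₂₁ᴴ
          = U₂₂ᴴ + (U₁₂ᴴ * U₁₂ᴴ⁻¹) * (U₁₂⁻¹ * (U₁₁ * U₂₁ᴴ)) from by noncomm_ring,
        Matrix.mul_nonsing_inv _ d12h, one_mul, k1,
        show U₁₂⁻¹ * -(U₁₂ * U₂₂ᴴ) = -((U₁₂⁻¹ * U₁₂) * U₂₂ᴴ) from by noncomm_ring,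
        Matrix.nonsing_inv_mul _ d12, one_mul, add_neg_cancel]
    · rw [i3, show U₁₂ᴴ * (U₁₂ᴴ⁻¹ * U₁₂⁻¹) * U₁₂
          = (U₁₂ᴴ * U₁₂ᴴ⁻¹) * (U₁₂⁻¹ * U₁₂) from by noncomm_ring,
        Matrix.mul_nonsing_inv _ d12h, Matrix.nonsing_inv_mul _ d12, one_mul]
    · rw [i4, show U₂₁ * (U₂₁⁻¹ * U₂₁ᴴ⁻¹) * U₂₁ᴴ
          = (U₂₁ * U₂₁⁻¹) * (U₂₁ᴴ⁻¹ * U₂₁ᴴ) from by noncomm_ring,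
        Matrix.mul_nonsing_inv _ d21, Matrix.nonsing_inv_mul _ d21h, one_mul]
    · rw [i4, show U₂₂ + U₂₁ * (U₂₁⁻¹ * U₂₁ᴴ⁻¹) * U₁₁ᴴ * U₁₂
          = U₂₂ + (U₂₁ * U₂₁⁻¹) * (U₂₁ᴴ⁻¹ * (U₁₁ᴴ * U₁₂)) from by noncomm_ring,
        Matrix.mul_nonsing_inv _ d21, one_mul,
        show U₁₁ᴴ * U₁₂ = -(U₂₁ᴴ * U₂₂) from eq_neg_of_add_eq_zero_left c12,
        show U₂₁ᴴ⁻¹ * -(U₂₁ᴴ * U₂₂) = -((U₂₁ᴴ⁻¹ * U₂₁ᴴ) * U₂₂) from by noncomm_ring,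
        Matrix.nonsing_inv_mul _ d21h, one_mul, add_neg_cancel]
end

section
/- Let S be a unitary 2p×2p matrix (scattering matrix) with p×p blocks S₁₁, S₁₂, S₂₁, S₂₂ and suppose S₁₂ is invertible. Then the transfer matrix Λ = [[S₁₂⁻¹, −S₁₂⁻¹ S₁₁],[S₂₂ S₁₂⁻¹, S₂₁ − S₂₂ S₁₂⁻¹ S₁₁]] belongs to U(p,p), i.e. Λ* J Λ = J where J = diag(I_p, −I_p). -/
open Matrix

/-- The transfer matrix `Λ = [[S₁₂⁻¹, −S₁₂⁻¹S₁₁],[S₂₂S₁₂⁻¹, S₂₁ − S₂₂S₁₂⁻¹S₁₁]]`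
associated to a unitary scattering matrix `S` with invertible block `S₁₂` belongs to
`U(p,p)`, i.e. `Λ* J Λ = J` with `J = diag(I, −I)`. -/
theorem transfer_matrix_mem_indefinite_unitary
    {p : ℕ}
    (S₁₁ S₁₂ S₂₁ S₂₂ : Matrix (Fin p) (Fin p) ℂ)
    (hS : fromBlocks S₁₁ S₁₂ S₂₁ S₂₂ ∈ Matrix.unitaryGroup (Fin p ⊕ Fin p) ℂ)
    (h12 : IsUnit S₁₂) :
    (fromBlocks (S₁₂⁻¹) (-(S₁₂⁻¹ * S₁₁)) (S₂₂ * S₁₂⁻¹) (S₂₁ - S₂₂ * S₁₂⁻¹ * S₁₁))ᴴ *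
        (fromBlocks 1 0 0 (-1) : Matrix (Fin p ⊕ Fin p) (Fin p ⊕ Fin p) ℂ) *
        fromBlocks (S₁₂⁻¹) (-(S₁₂⁻¹ * S₁₁)) (S₂₂ * S₁₂⁻¹) (S₂₁ - S₂₂ * S₁₂⁻¹ * S₁₁) =
      (fromBlocks 1 0 0 (-1) : Matrix (Fin p ⊕ Fin p) (Fin p ⊕ Fin p) ℂ) := by
  have hU : (fromBlocks S₁₁ S₁₂ S₂₁ S₂₂)ᴴ * fromBlocks S₁₁ S₁₂ S₂₁ S₂₂ = 1 :=
    hS.1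
  rw [fromBlocks_conjTranspose, fromBlocks_multiply, ← fromBlocks_one,
    fromBlocks_inj] at hU
  obtain ⟨e11, e12, e21, e22⟩ := hU
  have hdet : IsUnit S₁₂.det := (Matrix.isUnit_iff_isUnit_det _).mp h12
  have hAi : S₁₂ * S₁₂⁻¹ = 1 := mul_nonsing_inv _ hdet
  have hiA : S₁₂⁻¹ * S₁₂ = 1 := nonsing_inv_mul _ hdet
  have hAih : S₁₂⁻¹ᴴ * S₁₂ᴴ = 1 := by
    rw [← conjTranspose_mul, hAi, conjTranspose_one]
  have h22' : S₂₂ᴴ * S₂₂ = 1 - S₁₂ᴴ * S₁₂ := by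
    rw [← e22]; noncomm_ring
  have h21' : S₂₂ᴴ * S₂₁ = -(S₁₂ᴴ * S₁₁) := by
    rw [eq_neg_iff_add_eq_zero, add_comm]; exact e21
  have h12' : S₂₁ᴴ * S₂₂ = -(S₁₁ᴴ * S₁₂) := by
    rw [eq_neg_iff_add_eq_zero, add_comm]; exact e12
  rw [fromBlocks_conjTranspose, fromBlocks_multiply, fromBlocks_multiply, fromBlocks_inj]
  simp only [conjTranspose_mul, conjTranspose_neg, conjTranspose_sub, Matrix.mul_one,
    Matrix.mul_neg, Matrix.neg_mul, Matrix.one_mul, Matrix.mul_zero, Matrix.zero_mul,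
    add_zero, zero_add, neg_zero]
  refine ⟨?_, ?_, ?_, ?_⟩
  · trans (S₁₂⁻¹ᴴ * S₁₂⁻¹ - S₁₂⁻¹ᴴ * (S₂₂ᴴ * S₂₂) * S₁₂⁻¹)
    · noncomm_ring
    rw [h22']
    trans (S₁₂⁻¹ᴴ * S₁₂ᴴ * (S₁₂ * S₁₂⁻¹))
    · noncomm_ring
    rw [hAih, hAi, Matrix.one_mul]
  · trans (S₁₂⁻¹ᴴ * (S₂₂ᴴ * S₂₂) * (S₁₂⁻¹ * S₁₁) - S₁₂⁻¹ᴴ * (S₂₂ᴴ * S₂₁)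
        - S₁₂⁻¹ᴴ * (S₁₂⁻¹ * S₁₁))
    · noncomm_ring
    rw [h22', h21']
    trans (S₁₂⁻¹ᴴ * S₁₂ᴴ * S₁₁ - (S₁₂⁻¹ᴴ * S₁₂ᴴ) * (S₁₂ * S₁₂⁻¹ * S₁₁))
    · noncomm_ring
    rw [hAih, hAi]
    noncomm_ring
  · trans (-(S₁₁ᴴ * (S₁₂⁻¹ᴴ * S₁₂⁻¹)) - S₂₁ᴴ * S₂₂ * S₁₂⁻¹
        + S₁₁ᴴ * S₁₂⁻¹ᴴ * (S₂₂ᴴ * S₂₂) * S₁₂⁻¹)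
    · noncomm_ring
    rw [h12', h22']
    trans (S₁₁ᴴ * (S₁₂ * S₁₂⁻¹) - S₁₁ᴴ * (S₁₂⁻¹ᴴ * S₁₂ᴴ) * (S₁₂ * S₁₂⁻¹))
    · noncomm_ring
    rw [hAih, hAi]
    noncomm_ring
  · trans (S₁₁ᴴ * (S₁₂⁻¹ᴴ * S₁₂⁻¹) * S₁₁ - S₂₁ᴴ * S₂₁
        + (S₂₁ᴴ * S₂₂) * (S₁₂⁻¹ * S₁₁) + S₁₁ᴴ * S₁₂⁻¹ᴴ * (S₂₂ᴴ * S₂₁)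
        - S₁₁ᴴ * S₁₂⁻¹ᴴ * (S₂₂ᴴ * S₂₂) * (S₁₂⁻¹ * S₁₁))
    · noncomm_ring
    rw [h12', h21', h22']
    trans (-(S₂₁ᴴ * S₂₁) - S₁₁ᴴ * (S₁₂ * S₁₂⁻¹) * S₁₁ - S₁₁ᴴ * (S₁₂⁻¹ᴴ * S₁₂ᴴ) * S₁₁
        + S₁₁ᴴ * (S₁₂⁻¹ᴴ * S₁₂ᴴ) * (S₁₂ * S₁₂⁻¹) * S₁₁)
    · noncomm_ring
    rw [hAih, hAi]
    trans (-(S₁₁ᴴ * S₁₁ + S₂₁ᴴ * S₂₁))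
    · noncomm_ring
    rw [e11]
end

section
/- Let S be a unitary 2p×2p matrix with invertible block S₁₂, and suppose additionally that S is symmetric (Sᵀ = S, so in particular S₂₁ = S₁₂ᵀ). Then the transfer matrix Λ = [[S₁₂⁻¹, −S₁₂⁻¹ S₁₁],[S₂₂ S₁₂⁻¹, S₂₁ − S₂₂ S₁₂⁻¹ S₁₁]] has determinant 1, i.e. Λ ∈ SU(p,p). -/
open Matrix

/-- Theorem 5.3: if the unitary scattering matrix `S` is symmetric (`Sᵀ = S`) and its
block `S₁₂` is invertible, then the associated transfer matrix has determinant `1`. -/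
theorem transfer_matrix_det_one_of_symmetric
    {p : ℕ}
    (S₁₁ S₁₂ S₂₁ S₂₂ : Matrix (Fin p) (Fin p) ℂ)
    (hS : fromBlocks S₁₁ S₁₂ S₂₁ S₂₂ ∈ Matrix.unitaryGroup (Fin p ⊕ Fin p) ℂ)
    (h12 : IsUnit S₁₂)
    (hsym : (fromBlocks S₁₁ S₁₂ S₂₁ S₂₂)ᵀ = fromBlocks S₁₁ S₁₂ S₂₁ S₂₂) :
    (fromBlocks (S₁₂⁻¹) (-(S₁₂⁻¹ * S₁₁)) (S₂₂ * S₁₂⁻¹) (S₂₁ - S₂₂ * S₁₂⁻¹ * S₁₁)).det = 1 := by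
  rw [fromBlocks_transpose, fromBlocks_inj] at hsym
  obtain ⟨-, h21, -, -⟩ := hsym
  have hinv : Invertible S₁₂ := h12.invertible
  have hinv' : Invertible (S₁₂⁻¹) := inferInstance
  have hdet : IsUnit S₁₂.det := (isUnit_iff_isUnit_det _).mp h12
  rw [det_fromBlocks₁₁, invOf_eq_nonsing_inv, nonsing_inv_nonsing_inv _ hdet]
  have key : S₂₁ - S₂₂ * S₁₂⁻¹ * S₁₁ - S₂₂ * S₁₂⁻¹ * S₁₂ * -(S₁₂⁻¹ * S₁₁) = S₂₁ := by
    rw [Matrix.inv_mul_cancel_right_of_invertible]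
    noncomm_ring
  rw [key, det_nonsing_inv, ← det_transpose S₂₁, h21,
    Ring.inverse_mul_cancel _ hdet]
end

section
/- Let Λ ∈ U(p,p) be a 2p×2p matrix with p×p blocks Λ₁₁, Λ₁₂, Λ₂₁, Λ₂₂ such that Λ₁₁ is invertible. Then the matrix S = [[−Λ₁₁⁻¹Λ₁₂, Λ₁₁⁻¹],[Λ₂₂ − Λ₂₁Λ₁₁⁻¹Λ₁₂, Λ₂₁Λ₁₁⁻¹]] is unitary. -/
open Matrix

/-- If `Λ ∈ U(p,p)` (i.e. `Λ* J Λ = J` with `J = diag(I, −I)`) and `Λ₁₁` is invertible,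
then the associated scattering matrix
`S = [[−Λ₁₁⁻¹Λ₁₂, Λ₁₁⁻¹],[Λ₂₂ − Λ₂₁Λ₁₁⁻¹Λ₁₂, Λ₂₁Λ₁₁⁻¹]]` is unitary. -/
theorem scattering_matrix_of_transfer_unitary
    {p : ℕ}
    (Λ₁₁ Λ₁₂ Λ₂₁ Λ₂₂ : Matrix (Fin p) (Fin p) ℂ)
    (hΛ : (fromBlocks Λ₁₁ Λ₁₂ Λ₂₁ Λ₂₂)ᴴ *
        (fromBlocks 1 0 0 (-1) : Matrix (Fin p ⊕ Fin p) (Fin p ⊕ Fin p) ℂ) *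
        fromBlocks Λ₁₁ Λ₁₂ Λ₂₁ Λ₂₂ =
      (fromBlocks 1 0 0 (-1) : Matrix (Fin p ⊕ Fin p) (Fin p ⊕ Fin p) ℂ))
    (h11 : IsUnit Λ₁₁) :
    fromBlocks (-(Λ₁₁⁻¹ * Λ₁₂)) (Λ₁₁⁻¹) (Λ₂₂ - Λ₂₁ * Λ₁₁⁻¹ * Λ₁₂) (Λ₂₁ * Λ₁₁⁻¹)
      ∈ Matrix.unitaryGroup (Fin p ⊕ Fin p) ℂ := by
  set A := Λ₁₁; set B := Λ₁₂; set C := Λ₂₁; set D := Λ₂₂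
  set M : Matrix (Fin p ⊕ Fin p) (Fin p ⊕ Fin p) ℂ := fromBlocks A B C D with hM
  set J : Matrix (Fin p ⊕ Fin p) (Fin p ⊕ Fin p) ℂ := fromBlocks 1 0 0 (-1) with hJ
  have hdet : IsUnit A.det := (Matrix.isUnit_iff_isUnit_det A).mp h11
  have hKA : A⁻¹ * A = 1 := Matrix.nonsing_inv_mul A hdet
  have hAK : A * A⁻¹ = 1 := Matrix.mul_nonsing_inv A hdet
  have hAK' : Aᴴ * (A⁻¹)ᴴ = 1 := by
    have := congrArg conjTranspose hKA
    simpa [conjTranspose_mul] using this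
  have hKA' : (A⁻¹)ᴴ * Aᴴ = 1 := by
    have := congrArg conjTranspose hAK
    simpa [conjTranspose_mul] using this
  have hJJ : J * J = 1 := by
    rw [hJ, fromBlocks_multiply, ← fromBlocks_one, fromBlocks_inj]
    refine ⟨?_, ?_, ?_, ?_⟩ <;> simp
  have hL : (J * Mᴴ * J) * M = 1 := by
    calc (J * Mᴴ * J) * M = J * (Mᴴ * J * M) := by
          rw [Matrix.mul_assoc, Matrix.mul_assoc, Matrix.mul_assoc]
      _ = J * J := by rw [show Mᴴ * J * M = J from hΛ]
      _ = 1 := hJJ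
  have hR : M * (J * Mᴴ * J) = 1 := mul_eq_one_comm.mp hL
  have key : M * (J * Mᴴ) = J := by
    calc M * (J * Mᴴ) = M * (J * Mᴴ) * (J * J) := by rw [hJJ, Matrix.mul_one]
      _ = (M * (J * Mᴴ * J)) * J := by
          simp only [Matrix.mul_assoc]
      _ = J := by rw [hR, Matrix.one_mul]
  have hblocks : fromBlocks (A * Aᴴ - B * Bᴴ) (A * Cᴴ - B * Dᴴ)
      (C * Aᴴ - D * Bᴴ) (C * Cᴴ - D * Dᴴ) = fromBlocks 1 0 0 (-1) := by
    rw [← hJ, ← key, hM, hJ, fromBlocks_conjTranspose, fromBlocks_multiply,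
      fromBlocks_multiply, fromBlocks_inj]
    refine ⟨?_, ?_, ?_, ?_⟩ <;> noncomm_ring
  obtain ⟨e1, e2, e3, e4⟩ := fromBlocks_inj.mp hblocks
  have hBB : B * Bᴴ = A * Aᴴ - 1 := by
    rw [← e1]; noncomm_ring
  have hBD : B * Dᴴ = A * Cᴴ := by
    have : A * Cᴴ - B * Dᴴ = 0 := e2
    linear_combination (norm := noncomm_ring) -this
  have hDB : D * Bᴴ = C * Aᴴ := by
    have : C * Aᴴ - D * Bᴴ = 0 := e3
    linear_combination (norm := noncomm_ring) -this
  have hDD : D * Dᴴ = C * Cᴴ + 1 := by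
    have : C * Cᴴ - D * Dᴴ = -1 := e4
    linear_combination (norm := noncomm_ring) -this
  rw [Matrix.mem_unitaryGroup_iff]
  show _ * _ᴴ = 1
  rw [fromBlocks_conjTranspose, fromBlocks_multiply, ← fromBlocks_one, fromBlocks_inj]
  refine ⟨?_, ?_, ?_, ?_⟩
  · -- block (1,1)
    calc -(A⁻¹ * B) * (-(A⁻¹ * B))ᴴ + A⁻¹ * (A⁻¹)ᴴ
        = A⁻¹ * (B * Bᴴ) * (A⁻¹)ᴴ + A⁻¹ * (A⁻¹)ᴴ := by
          simp only [conjTranspose_neg, conjTranspose_mul]; noncomm_ring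
      _ = A⁻¹ * (A * Aᴴ - 1) * (A⁻¹)ᴴ + A⁻¹ * (A⁻¹)ᴴ := by rw [hBB]
      _ = (A⁻¹ * A) * (Aᴴ * (A⁻¹)ᴴ) - A⁻¹ * (A⁻¹)ᴴ + A⁻¹ * (A⁻¹)ᴴ := by noncomm_ring
      _ = 1 := by rw [hKA, hAK']; noncomm_ring
  · -- block (1,2)
    calc -(A⁻¹ * B) * (D - C * A⁻¹ * B)ᴴ + A⁻¹ * (C * A⁻¹)ᴴ
        = -(A⁻¹ * (B * Dᴴ)) + A⁻¹ * (B * Bᴴ) * ((A⁻¹)ᴴ * Cᴴ)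
            + A⁻¹ * ((A⁻¹)ᴴ * Cᴴ) := by
          simp only [conjTranspose_sub, conjTranspose_mul, conjTranspose_neg]; noncomm_ring
      _ = -(A⁻¹ * (A * Cᴴ)) + A⁻¹ * (A * Aᴴ - 1) * ((A⁻¹)ᴴ * Cᴴ)
            + A⁻¹ * ((A⁻¹)ᴴ * Cᴴ) := by rw [hBD, hBB]
      _ = -((A⁻¹ * A) * Cᴴ) + (A⁻¹ * A) * ((Aᴴ * (A⁻¹)ᴴ) * Cᴴ)
            - A⁻¹ * ((A⁻¹)ᴴ * Cᴴ) + A⁻¹ * ((A⁻¹)ᴴ * Cᴴ) := by noncomm_ring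
      _ = 0 := by rw [hKA, hAK']; noncomm_ring
  · -- block (2,1)
    calc (D - C * A⁻¹ * B) * (-(A⁻¹ * B))ᴴ + C * A⁻¹ * (A⁻¹)ᴴ
        = -((D * Bᴴ) * (A⁻¹)ᴴ) + C * A⁻¹ * (B * Bᴴ) * (A⁻¹)ᴴ
            + C * A⁻¹ * (A⁻¹)ᴴ := by
          simp only [conjTranspose_neg, conjTranspose_mul]; noncomm_ring
      _ = -((C * Aᴴ) * (A⁻¹)ᴴ) + C * A⁻¹ * (A * Aᴴ - 1) * (A⁻¹)ᴴ
            + C * A⁻¹ * (A⁻¹)ᴴ := by rw [hDB, hBB]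
      _ = -(C * (Aᴴ * (A⁻¹)ᴴ)) + C * (A⁻¹ * A) * (Aᴴ * (A⁻¹)ᴴ)
            - C * A⁻¹ * (A⁻¹)ᴴ + C * A⁻¹ * (A⁻¹)ᴴ := by noncomm_ring
      _ = 0 := by rw [hKA, hAK']; noncomm_ring
  · -- block (2,2)
    calc (D - C * A⁻¹ * B) * (D - C * A⁻¹ * B)ᴴ + C * A⁻¹ * (C * A⁻¹)ᴴ
        = (D * Dᴴ) - (D * Bᴴ) * ((A⁻¹)ᴴ * Cᴴ) - C * A⁻¹ * (B * Dᴴ)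
            + C * A⁻¹ * (B * Bᴴ) * ((A⁻¹)ᴴ * Cᴴ)
            + C * A⁻¹ * ((A⁻¹)ᴴ * Cᴴ) := by
          simp only [conjTranspose_sub, conjTranspose_mul]; noncomm_ring
      _ = (C * Cᴴ + 1) - (C * Aᴴ) * ((A⁻¹)ᴴ * Cᴴ) - C * A⁻¹ * (A * Cᴴ)
            + C * A⁻¹ * (A * Aᴴ - 1) * ((A⁻¹)ᴴ * Cᴴ)
            + C * A⁻¹ * ((A⁻¹)ᴴ * Cᴴ) := by rw [hDD, hDB, hBD, hBB]
      _ = (C * Cᴴ + 1) - C * ((Aᴴ * (A⁻¹)ᴴ) * Cᴴ) - C * ((A⁻¹ * A) * Cᴴ)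
            + C * (A⁻¹ * A) * ((Aᴴ * (A⁻¹)ᴴ) * Cᴴ)
            - C * A⁻¹ * ((A⁻¹)ᴴ * Cᴴ) + C * A⁻¹ * ((A⁻¹)ᴴ * Cᴴ) := by noncomm_ring
      _ = 1 := by rw [hKA, hAK']; noncomm_ring
end
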